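/- Let m, d ≥ 1, let A ⊆ Sym(m) be a set of permutations of {1,...,m}, and let S ⊆ 𝒫({1,...,m}) be a set system with the property that for every σ ∈ A and every k ≤ m, the initial image set {σ(1), σ(2), ..., σ(k)} belongs to S. Suppose there exists a d-element subset J = {j_1 < ... < j_d} ⊆ {1,...,m} such that the restrictions of the permutations in A to J realize all d! relative order patterns on J (i.e., for every bijection τ of J there is σ ∈ A whose induced order on J agrees with τ). Then S shatters J: for every K ⊆ J there exists a set s ∈ S with s ∩ J = K. -/

import Mathlib

/-!
Enumerate `J` with the elements of `K` first. Some `σ ∈ A` realizes this order pattern, so under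
`σ⁻¹` every element of `K` comes before every element of `J \ K`; cutting `σ` just after the last
element of `K` gives an initial image set whose trace on `J` is exactly `K`.
-/

open Finset

theorem Finset.exists_enum_initial_segment {α : Type*} [DecidableEq α] {K J : Finset α}
    (hKJ : K ⊆ J) :
    ∃ e : Fin #J → α, Function.Injective e ∧ Set.range e = J ∧
      ∀ i, e i ∈ K ↔ (i : ℕ) < #K := by
  rw [← card_sdiff_add_card_eq_card hKJ, add_comm]
  set a : Fin #K → α := fun i => K.equivFin.symm i
  set b : Fin #(J \ K) → α := fun i => (J \ K).equivFin.symm i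
  have ha : ∀ i, a i ∈ K := fun i => (K.equivFin.symm i).2
  have hb : ∀ i, b i ∈ J \ K := fun i => ((J \ K).equivFin.symm i).2
  refine ⟨Fin.append a b, ?_, ?_, ?_⟩
  · refine Fin.append_injective_iff.2 ⟨?_, ?_, fun i j hij => (mem_sdiff.1 (hb j)).2 (hij ▸ ha i)⟩
    · exact Subtype.val_injective.comp K.equivFin.symm.injective
    · exact Subtype.val_injective.comp (J \ K).equivFin.symm.injective
  · ext x
    refine ⟨?_, fun hx => ?_⟩
    · rintro ⟨i, rfl⟩
      induction i using Fin.addCases with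
      | left i => simpa using hKJ (ha i)
      | right i => simpa using (mem_sdiff.1 (hb i)).1
    · by_cases hxK : x ∈ K
      · exact ⟨Fin.castAdd _ (K.equivFin ⟨x, hxK⟩), by simp [a]⟩
      · exact ⟨Fin.natAdd _ ((J \ K).equivFin ⟨x, mem_sdiff.2 ⟨hx, hxK⟩⟩), by simp [b]⟩
  · intro i
    induction i using Fin.addCases with
    | left i => simpa using ha i
    | right i => simpa using (mem_sdiff.1 (hb i)).2

theorem Equiv.Perm.exists_image_val_lt_inter_eq {m : ℕ} (σ : Equiv.Perm (Fin m))
    {K J : Finset (Fin m)} (hKJ : K ⊆ J) (hσ : ∀ y ∈ K, ∀ x ∈ J, x ∉ K → σ.symm y < σ.symm x) :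
    ∃ k ≤ m, σ '' {i : Fin m | (i : ℕ) < k} ∩ J = K := by
  refine ⟨K.sup fun y => (σ.symm y : ℕ) + 1, Finset.sup_le fun y _ => (σ.symm y).2, ?_⟩
  ext x
  simp only [σ.image_eq_preimage_symm, Set.mem_inter_iff, Set.mem_preimage, Set.mem_ofPred_eq,
    mem_coe, Finset.lt_sup_iff, Nat.lt_add_one_iff]
  refine ⟨fun ⟨⟨y, hy, hxy⟩, hxJ⟩ => ?_, fun hxK => ⟨⟨x, hxK, le_rfl⟩, hKJ hxK⟩⟩
  by_contra hxK
  exact (hσ y hy x hxJ hxK).not_ge hxy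

theorem stmt_3_general (m d : ℕ)
    (A : Set (Equiv.Perm (Fin m))) (S : Set (Set (Fin m)))
    (J : Finset (Fin m)) (hJ : J.card = d)
    (hS : ∀ σ ∈ A, ∀ k : ℕ, k ≤ m → (σ '' {i : Fin m | (i : ℕ) < k}) ∈ S)
    (hpat : ∀ e : Fin d → Fin m, Function.Injective e → (∀ i, e i ∈ J) →
      ∃ σ ∈ A, ∀ i j : Fin d, i < j → σ.symm (e i) < σ.symm (e j)) :
    ∀ K ⊆ J, ∃ s ∈ S, s ∩ (J : Set (Fin m)) = (K : Set (Fin m)) := by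
  intro K hKJ
  subst hJ
  obtain ⟨e, he_inj, he_range, he_K⟩ := exists_enum_initial_segment hKJ
  obtain ⟨σ, hσA, hσ⟩ := hpat e he_inj fun i => mem_coe.1 (he_range ▸ Set.mem_range_self i)
  have hK_first : ∀ y ∈ K, ∀ x ∈ J, x ∉ K → σ.symm y < σ.symm x := by
    intro y hy x hx hxK
    obtain ⟨i, rfl⟩ : y ∈ Set.range e := he_range ▸ hKJ hy
    obtain ⟨j, rfl⟩ : x ∈ Set.range e := he_range ▸ hx
    exact hσ i j (Fin.lt_def.2 (((he_K i).1 hy).trans_le (not_lt.1 (hxK ∘ (he_K j).2))))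
  obtain ⟨k, hk, hsK⟩ := σ.exists_image_val_lt_inter_eq hKJ hK_first
  exact ⟨_, hS σ hσA k hk, hsK⟩

theorem stmt_3 (m d : ℕ) (hm : 1 ≤ m) (hd : 1 ≤ d)
    (A : Set (Equiv.Perm (Fin m))) (S : Set (Set (Fin m)))
    (J : Finset (Fin m)) (hJ : J.card = d)
    (hS : ∀ σ ∈ A, ∀ k : ℕ, k ≤ m → (σ '' {i : Fin m | (i : ℕ) < k}) ∈ S)
    (hpat : ∀ e : Fin d → Fin m, Function.Injective e → (∀ i, e i ∈ J) →
      ∃ σ ∈ A, ∀ i j : Fin d, i < j → σ.symm (e i) < σ.symm (e j)) :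
    ∀ K ⊆ J, ∃ s ∈ S, s ∩ (J : Set (Fin m)) = (K : Set (Fin m)) :=
  stmt_3_general m d A S J hJ hS hpat
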